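/- For any fitness graph 𝒢=(G,(m,r)) in which every node has a self-loop (possibly of weight 0) and any seed set S ⊆ V, the fixation probability of the Loopy process started at S equals the fixation probability of the Heterogeneous Moran process started at S. -/

import Mathlib

open Finset
open scoped Classical

/-- A fitness graph: a finite strongly connected weighted directed graph together with
mutant and resident fitness functions. `w u v > 0` encodes that `(u,v)` is an edge
of non-zero weight; `w u ·` is a probability distribution. -/
structure FitnessGraph (V : Type) [Fintype V] [DecidableEq V] where
  w : V → V → ℝ
  m : V → ℝ
  r : V → ℝ
  w_nonneg : ∀ u v, 0 ≤ w u v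
  w_rowsum : ∀ u, ∑ v, w u v = 1
  strongly_connected : ∀ u v : V, Relation.ReflTransGen (fun a b => 0 < w a b) u v
  m_pos : ∀ u, 0 < m u
  r_pos : ∀ u, 0 < r u

variable {V : Type} [Fintype V] [DecidableEq V]

/-- A fitness graph is mutant-biased if `m(u) ≥ r(u)` for every node `u`. -/
def FitnessGraph.MutantBiased (G : FitnessGraph V) : Prop :=
  ∀ u, G.r u ≤ G.m u

/-- The (out-)degree of a node: the number of neighbors along edges of non-zero weight. -/
noncomputable def FitnessGraph.deg (G : FitnessGraph V) (u : V) : ℕ :=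
  (Finset.univ.filter fun v => 0 < G.w u v).card

/-- A fitness graph is undirected if its edge relation is symmetric and the weights
are uniform: `w(u,v) = 1/d(u)` for every edge `(u,v)`. -/
def FitnessGraph.Undirected (G : FitnessGraph V) : Prop :=
  (∀ u v, 0 < G.w u v → 0 < G.w v u) ∧
  ∀ u v, 0 < G.w u v → G.w u v = 1 / (G.deg u : ℝ)

/-- The fitness of node `u` in configuration `X`: `m(u)` if `u` is a mutant, `r(u)` otherwise. -/
def FitnessGraph.fit (G : FitnessGraph V) (X : Finset V) (u : V) : ℝ :=
  if u ∈ X then G.m u else G.r u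

/-- Total population fitness in configuration `X`. -/
def FitnessGraph.totalFit (G : FitnessGraph V) (X : Finset V) : ℝ :=
  ∑ u, G.fit X u

/-- The configuration resulting from `X` when `u` reproduces and replaces `v`. -/
def moranNext (X : Finset V) (u v : V) : Finset V :=
  if u ∈ X then insert v X else X.erase v

/-- One-step transition probability of the Heterogeneous Moran process. -/
noncomputable def FitnessGraph.step (G : FitnessGraph V) (X Y : Finset V) : ℝ :=
  ∑ u, ∑ v, (G.fit X u / G.totalFit X) * G.w u v * (if moranNext X u v = Y then 1 else 0)

/-- `t`-step transition probability of the Heterogeneous Moran process. -/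
noncomputable def FitnessGraph.stepN (G : FitnessGraph V) : ℕ → Finset V → Finset V → ℝ
  | 0, X, Y => if X = Y then 1 else 0
  | t + 1, X, Y => ∑ Z, FitnessGraph.stepN G t X Z * G.step Z Y

/-- Fixation probability: the probability that, started from seed set `S`, the process
eventually reaches the all-mutant configuration `V`; since `V` is absorbing this equals
`⨆ t, P(X_t = V)`. -/
noncomputable def FitnessGraph.fp (G : FitnessGraph V) (S : Finset V) : ℝ :=
  ⨆ t : ℕ, G.stepN t S Finset.univ

/-- The maximum fitness `f_max = max_u max(m(u), r(u))`. -/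
noncomputable def FitnessGraph.fmax (G : FitnessGraph V) [Nonempty V] : ℝ :=
  Finset.univ.sup' Finset.univ_nonempty fun u => max (G.m u) (G.r u)

/-- Configuration-dependent weights of the Loopy process: the self-loop probability of
each node is adjusted so that all nodes reproduce at the same rate. -/
noncomputable def FitnessGraph.loopyW (G : FitnessGraph V) [Nonempty V]
    (X : Finset V) (u v : V) : ℝ :=
  if v = u then 1 - (G.fit X u / G.fmax) * (1 - G.w u u)
  else (G.fit X u / G.fmax) * G.w u v

/-- One-step transition probability of the Loopy process: a node `u` is sampled
uniformly at random, then `v` is sampled with probability `w_X(u,v)`. -/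
noncomputable def FitnessGraph.loopyStep (G : FitnessGraph V) [Nonempty V]
    (X Y : Finset V) : ℝ :=
  ∑ u, ∑ v, (1 / (Fintype.card V : ℝ)) * G.loopyW X u v *
    (if moranNext X u v = Y then 1 else 0)

/-- `t`-step transition probability of the Loopy process. -/
noncomputable def FitnessGraph.loopyStepN (G : FitnessGraph V) [Nonempty V] :
    ℕ → Finset V → Finset V → ℝ
  | 0, X, Y => if X = Y then 1 else 0
  | t + 1, X, Y => ∑ Z, FitnessGraph.loopyStepN G t X Z * G.loopyStep Z Y

/-- Fixation probability of the Loopy process started at seed set `S`. -/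
noncomputable def FitnessGraph.loopyFp (G : FitnessGraph V) [Nonempty V] (S : Finset V) : ℝ :=
  ⨆ t : ℕ, G.loopyStepN t S Finset.univ

/-!
Off the diagonal, the Loopy transition matrix is the Moran one with row `X` multiplied by the
positive factor `F_X / (n f_max)`: the Loopy process is a time change of the Moran process.
Such a rescaling does not change which functions are harmonic, and the probability of absorption
in the all-mutant configuration is the least nonnegative harmonic function equal to `1` there,
so the two fixation probabilities agree.
-/

namespace Matrix

variable {n : Type*} [Fintype n] {P Q : Matrix n n ℝ}

lemma mulVec_apply_sub_self (hP : P *ᵥ 1 = 1) (h : n → ℝ) (i : n) :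
    (P *ᵥ h) i - h i = ∑ j, P i j * (h j - h i) := by
  have hrow : ∑ j, P i j = 1 := by simpa [mulVec, dotProduct] using congrFun hP i
  simp only [mul_sub, sum_sub_distrib, ← sum_mul, hrow, one_mul, mulVec, dotProduct]

lemma mulVec_eq_self_iff_of_offDiag_eq_mul (hP : P *ᵥ 1 = 1) (hQ : Q *ᵥ 1 = 1) {c : n → ℝ}
    (hc : ∀ i, c i ≠ 0) (hQP : ∀ i j, j ≠ i → Q i j = c i * P i j) (h : n → ℝ) :
    P *ᵥ h = h ↔ Q *ᵥ h = h := by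
  have key : ∀ i, (Q *ᵥ h) i - h i = c i * ((P *ᵥ h) i - h i) := fun i => by
    rw [mulVec_apply_sub_self hQ, mulVec_apply_sub_self hP, mul_sum]
    refine sum_congr rfl fun j _ => ?_
    rcases eq_or_ne j i with rfl | hji
    · simp
    · rw [hQP i j hji, mul_assoc]
  simp only [funext_iff, ← sub_eq_zero (a := (_ *ᵥ h) _), key, mul_eq_zero, hc, false_or]

variable [DecidableEq n] {a : n}

/-- For an absorbing state `a`, `(P ^ t) i a` is the probability of having reached `a` by
time `t`, so this supremum is the probability of ever reaching `a` from `i`. -/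
noncomputable def absorptionProb (P : Matrix n n ℝ) (a i : n) : ℝ :=
  ⨆ t : ℕ, (P ^ t) i a

lemma monotone_pow_apply (hP : P ∈ rowStochastic ℝ n) (ha : P a a = 1) (i : n) :
    Monotone fun t => (P ^ t) i a := by
  refine monotone_nat_of_le_succ fun t => ?_
  calc (P ^ t) i a = (P ^ t) i a * P a a := by rw [ha, mul_one]
    _ ≤ ∑ j, (P ^ t) i j * P j a :=
      single_le_sum (fun j _ => mul_nonneg ((pow_mem hP t).1 i j) (hP.1 j a)) (mem_univ a)
    _ = (P ^ (t + 1)) i a := by rw [pow_succ, mul_apply]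

lemma bddAbove_range_pow_apply (hP : P ∈ rowStochastic ℝ n) (i : n) :
    BddAbove (Set.range fun t => (P ^ t) i a) :=
  ⟨1, Set.forall_mem_range.2 fun t => le_one_of_mem_rowStochastic (pow_mem hP t)⟩

lemma tendsto_pow_apply_absorptionProb (hP : P ∈ rowStochastic ℝ n) (ha : P a a = 1) (i : n) :
    Filter.Tendsto (fun t => (P ^ t) i a) Filter.atTop (nhds (absorptionProb P a i)) :=
  tendsto_atTop_ciSup (monotone_pow_apply hP ha i) (bddAbove_range_pow_apply hP i)

lemma absorptionProb_nonneg (hP : P ∈ rowStochastic ℝ n) (i : n) : 0 ≤ absorptionProb P a i :=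
  (nonneg_of_mem_rowStochastic (pow_mem hP 0)).trans (le_ciSup (bddAbove_range_pow_apply hP i) 0)

lemma absorptionProb_self (hP : P ∈ rowStochastic ℝ n) : absorptionProb P a a = 1 :=
  le_antisymm (ciSup_le fun t => le_one_of_mem_rowStochastic (pow_mem hP t))
    ((le_ciSup (bddAbove_range_pow_apply hP a) 0).trans_eq' (by simp))

lemma mulVec_absorptionProb (hP : P ∈ rowStochastic ℝ n) (ha : P a a = 1) :
    P *ᵥ absorptionProb P a = absorptionProb P a := by
  funext i
  have hstep : (fun t => (P ^ (t + 1)) i a) = fun t => ∑ j, P i j * (P ^ t) j a := by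
    funext t; rw [pow_succ', mul_apply]
  refine tendsto_nhds_unique ?_ ((tendsto_pow_apply_absorptionProb hP ha i).comp
    (Filter.tendsto_add_atTop_nat 1))
  rw [Function.comp_def, hstep]
  exact tendsto_finsetSum _ fun j _ => (tendsto_pow_apply_absorptionProb hP ha j).const_mul _

lemma pow_mulVec_of_mulVec_eq {h : n → ℝ} (hh : P *ᵥ h = h) (t : ℕ) : P ^ t *ᵥ h = h := by
  induction t with
  | zero => exact one_mulVec h
  | succ t ih => rw [pow_succ, ← mulVec_mulVec, hh, ih]

lemma absorptionProb_le_of_mulVec_eq (hP : P ∈ rowStochastic ℝ n) {h : n → ℝ}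
    (hh : P *ᵥ h = h) (h0 : 0 ≤ h) (ha : h a = 1) : absorptionProb P a ≤ h := by
  intro i
  refine ciSup_le fun t => ?_
  calc (P ^ t) i a = (P ^ t) i a * h a := by rw [ha, mul_one]
    _ ≤ ∑ j, (P ^ t) i j * h j :=
      single_le_sum (fun j _ => mul_nonneg ((pow_mem hP t).1 i j) (h0 j)) (mem_univ a)
    _ = h i := congrFun (pow_mulVec_of_mulVec_eq hh t) i

lemma absorptionProb_eq_of_mulVec_eq_iff (hP : P ∈ rowStochastic ℝ n)
    (hQ : Q ∈ rowStochastic ℝ n) (hPa : P a a = 1) (hQa : Q a a = 1)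
    (hPQ : ∀ h : n → ℝ, P *ᵥ h = h ↔ Q *ᵥ h = h) :
    absorptionProb P a = absorptionProb Q a :=
  le_antisymm
    (absorptionProb_le_of_mulVec_eq hP ((hPQ _).2 (mulVec_absorptionProb hQ hQa))
      (absorptionProb_nonneg hQ) (absorptionProb_self hQ))
    (absorptionProb_le_of_mulVec_eq hQ ((hPQ _).1 (mulVec_absorptionProb hP hPa))
      (absorptionProb_nonneg hP) (absorptionProb_self hP))

end Matrix

open Matrix

lemma moranNext_univ (u v : V) : moranNext univ u v = univ := by
  simp [moranNext]

/-- The transition matrix of a Moran-type process in which, from configuration `X`, node `u`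
places its offspring on node `v` with probability `p X u v`. -/
noncomputable def replacementKernel (p : Finset V → V → V → ℝ) :
    Matrix (Finset V) (Finset V) ℝ :=
  of fun X Y => ∑ u, ∑ v, p X u v * if moranNext X u v = Y then 1 else 0

section ReplacementKernel

variable {p : Finset V → V → V → ℝ}

lemma sum_replacementKernel_apply (X : Finset V) :
    ∑ Y, replacementKernel p X Y = ∑ u, ∑ v, p X u v := by
  simp only [replacementKernel, of_apply]
  rw [sum_comm]
  refine sum_congr rfl fun u _ => ?_
  rw [sum_comm]
  simp

lemma replacementKernel_mem_rowStochastic (hp0 : ∀ X u v, 0 ≤ p X u v)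
    (hp1 : ∀ X, ∑ u, ∑ v, p X u v = 1) : replacementKernel p ∈ rowStochastic ℝ (Finset V) := by
  refine mem_rowStochastic_iff_sum.2 ⟨fun X Y => ?_, fun X => ?_⟩
  · exact sum_nonneg fun u _ => sum_nonneg fun v _ => mul_nonneg (hp0 X u v) (by positivity)
  · rw [sum_replacementKernel_apply, hp1]

lemma replacementKernel_univ_univ (hp1 : ∑ u, ∑ v, p univ u v = 1) :
    replacementKernel p univ univ = 1 := by
  simpa [replacementKernel, moranNext_univ] using hp1

lemma replacementKernel_apply_of_ne {q : Finset V → V → V → ℝ} {X Y : Finset V} {c : ℝ}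
    (hqp : ∀ u v, v ≠ u → q X u v = c * p X u v) (hY : Y ≠ X) :
    replacementKernel q X Y = c * replacementKernel p X Y := by
  simp only [replacementKernel, of_apply, mul_sum]
  refine sum_congr rfl fun u _ => sum_congr rfl fun v _ => ?_
  rcases eq_or_ne v u with rfl | hvu
  · have hstay : moranNext X v v = X := by
      unfold moranNext
      split_ifs with hv
      exacts [insert_eq_self.2 hv, erase_eq_self.2 hv]
    simp [hstay, hY.symm]
  · rw [hqp u v hvu, mul_assoc]

end ReplacementKernel

namespace FitnessGraph

variable (G : FitnessGraph V)

lemma fit_pos (X : Finset V) (u : V) : 0 < G.fit X u := by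
  unfold fit
  split_ifs
  exacts [G.m_pos u, G.r_pos u]

lemma totalFit_pos [Nonempty V] (X : Finset V) : 0 < G.totalFit X :=
  sum_pos (fun u _ => G.fit_pos X u) univ_nonempty

lemma fit_le_fmax [Nonempty V] (X : Finset V) (u : V) : G.fit X u ≤ G.fmax := by
  have hu : max (G.m u) (G.r u) ≤ G.fmax := le_sup' (fun u => max (G.m u) (G.r u)) (mem_univ u)
  unfold fit
  split_ifs
  exacts [(le_max_left _ _).trans hu, (le_max_right _ _).trans hu]

lemma fmax_pos [Nonempty V] : 0 < G.fmax :=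
  (G.fit_pos ∅ (Classical.arbitrary V)).trans_le (G.fit_le_fmax ∅ _)

lemma stepN_eq_pow (t : ℕ) : G.stepN t = of G.step ^ t := by
  induction t with
  | zero => ext X Y; simp [stepN, one_apply]
  | succ t ih => ext X Y; simp [stepN, pow_succ, mul_apply, ih]

lemma loopyStepN_eq_pow [Nonempty V] (t : ℕ) : G.loopyStepN t = of G.loopyStep ^ t := by
  induction t with
  | zero => ext X Y; simp [loopyStepN, one_apply]
  | succ t ih => ext X Y; simp [loopyStepN, pow_succ, mul_apply, ih]

lemma fp_eq_absorptionProb (S : Finset V) : G.fp S = absorptionProb (of G.step) univ S := by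
  simp [fp, absorptionProb, stepN_eq_pow]

lemma loopyFp_eq_absorptionProb [Nonempty V] (S : Finset V) :
    G.loopyFp S = absorptionProb (of G.loopyStep) univ S := by
  simp [loopyFp, absorptionProb, loopyStepN_eq_pow]

lemma of_step :
    of G.step = replacementKernel fun X u v => G.fit X u / G.totalFit X * G.w u v :=
  rfl

lemma of_loopyStep [Nonempty V] :
    of G.loopyStep = replacementKernel fun X u v => 1 / (Fintype.card V : ℝ) * G.loopyW X u v :=
  rfl

lemma sum_sum_moran_weights [Nonempty V] (X : Finset V) :
    ∑ u, ∑ v, G.fit X u / G.totalFit X * G.w u v = 1 := by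
  simp only [← mul_sum, G.w_rowsum, mul_one, ← sum_div]
  exact div_self (G.totalFit_pos X).ne'

lemma step_mem_rowStochastic [Nonempty V] : of G.step ∈ rowStochastic ℝ (Finset V) := by
  rw [of_step]
  refine replacementKernel_mem_rowStochastic (fun X u v => ?_) G.sum_sum_moran_weights
  have := G.totalFit_pos X
  have := G.fit_pos X u
  have := G.w_nonneg u v
  positivity

lemma step_univ_univ [Nonempty V] : G.step univ univ = 1 := by
  show of G.step univ univ = 1
  rw [of_step]
  exact replacementKernel_univ_univ (G.sum_sum_moran_weights univ)

lemma loopyW_nonneg [Nonempty V] (X : Finset V) (u v : V) : 0 ≤ G.loopyW X u v := by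
  have hq0 : 0 ≤ G.fit X u / G.fmax := (div_pos (G.fit_pos X u) G.fmax_pos).le
  have hq1 : G.fit X u / G.fmax ≤ 1 := (div_le_one G.fmax_pos).2 (G.fit_le_fmax X u)
  have hw1 : G.w u u ≤ 1 := by
    simpa [G.w_rowsum] using single_le_sum (fun v _ => G.w_nonneg u v) (mem_univ u)
  unfold loopyW
  split_ifs
  · nlinarith [G.w_nonneg u u]
  · exact mul_nonneg hq0 (G.w_nonneg u v)

lemma sum_loopyW [Nonempty V] (X : Finset V) (u : V) : ∑ v, G.loopyW X u v = 1 := by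
  have hv : ∀ v, G.loopyW X u v =
      (if v = u then 1 - G.fit X u / G.fmax else 0) + G.fit X u / G.fmax * G.w u v := by
    intro v
    unfold loopyW
    split_ifs with h
    · subst h; ring
    · simp
  simp [hv, sum_add_distrib, ← mul_sum, G.w_rowsum]

lemma sum_sum_loopy_weights [Nonempty V] (X : Finset V) :
    ∑ u, ∑ v, 1 / (Fintype.card V : ℝ) * G.loopyW X u v = 1 := by
  simp [← mul_sum, G.sum_loopyW]

lemma loopyStep_mem_rowStochastic [Nonempty V] :
    of G.loopyStep ∈ rowStochastic ℝ (Finset V) := by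
  rw [of_loopyStep]
  exact replacementKernel_mem_rowStochastic
    (fun X u v => mul_nonneg (by positivity) (G.loopyW_nonneg X u v)) G.sum_sum_loopy_weights

lemma loopyStep_univ_univ [Nonempty V] : G.loopyStep univ univ = 1 := by
  show of G.loopyStep univ univ = 1
  rw [of_loopyStep]
  exact replacementKernel_univ_univ (G.sum_sum_loopy_weights univ)

lemma loopyStep_eq_mul_step [Nonempty V] {X Y : Finset V} (hY : Y ≠ X) :
    G.loopyStep X Y = G.totalFit X / (Fintype.card V * G.fmax) * G.step X Y := by
  show of G.loopyStep X Y = _ * of G.step X Y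
  rw [of_loopyStep, of_step]
  refine replacementKernel_apply_of_ne (fun u v hvu => ?_) hY
  have := (G.totalFit_pos X).ne'
  have := G.fmax_pos.ne'
  have : (Fintype.card V : ℝ) ≠ 0 := Nat.cast_ne_zero.2 Fintype.card_ne_zero
  simp only [loopyW, if_neg hvu]
  field_simp

end FitnessGraph

/-- For any fitness graph and any seed set, the fixation probability of the Loopy
process equals that of the Heterogeneous Moran process. -/
theorem loopy_fp_eq_fp [Nonempty V] (G : FitnessGraph V) (S : Finset V) :
    G.loopyFp S = G.fp S := by
  have hL := G.loopyStep_mem_rowStochastic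
  have hM := G.step_mem_rowStochastic
  have hrate : ∀ X : Finset V, G.totalFit X / (Fintype.card V * G.fmax) ≠ 0 := fun X =>
    (div_pos (G.totalFit_pos X) (mul_pos (by exact_mod_cast Fintype.card_pos) G.fmax_pos)).ne'
  have harmonic := mulVec_eq_self_iff_of_offDiag_eq_mul hM.2 hL.2 hrate
    fun X Y hY => G.loopyStep_eq_mul_step hY
  rw [G.loopyFp_eq_absorptionProb, G.fp_eq_absorptionProb,
    absorptionProb_eq_of_mulVec_eq_iff hM hL G.step_univ_univ G.loopyStep_univ_univ harmonic]
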